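/- arXiv:2305.15300 — 6 statements merged into one kernel-verified Lean document; each statement's English description precedes it below -/
import Mathlib

section
/- Let V be an n-dimensional complex vector space, n ≥ 1, equipped with a Hermitian inner product H, and let p ∈ [1,∞). For a self-adjoint endomorphism h of (V,H) with eigenvalues λ₁,…,λ_n (counted with multiplicity), set ‖h‖_p^H := ((1/n)·Σ_{i=1}^n |λ_i|^p)^{1/p}. Then ‖·‖_p^H satisfies the triangle inequality: for any self-adjoint endomorphisms h₁, h₂ of (V,H), ‖h₁ + h₂‖_p^H ≤ ‖h₁‖_p^H + ‖h₂‖_p^H. -/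
/-!
Let `f` be an eigenbasis of `h₁ + h₂`. The eigenvalues of `h₁ + h₂` are the diagonal entries
`re ⟪fᵢ, h₁ fᵢ⟫ + re ⟪fᵢ, h₂ fᵢ⟫`, so Minkowski's inequality reduces the claim to bounding the
`p`-sum of the diagonal of `hₖ` in the basis `f` by the `p`-sum of its eigenvalues. That diagonal
is `M λ(hₖ)` for the doubly stochastic matrix `M = (‖⟪fᵢ, eⱼ⟫‖²)` relating `f` to an eigenbasis
`e` of `hₖ`, and Jensen's inequality for the convex function `|·| ^ p`, applied row by row, gives
`∑ᵢ |(M λ)ᵢ| ^ p ≤ ∑ⱼ |λⱼ| ^ p`.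
-/

open scoped BigOperators

noncomputable section

/-- `‖h‖_p^H := ((1/n)·Σᵢ |λᵢ|^p)^{1/p}` for a self-adjoint (symmetric) endomorphism `h` of an
`n`-dimensional complex inner product space, where `λ₁,…,λₙ` are the eigenvalues of `h`
counted with multiplicity. -/
def symPNorm {V : Type*} [NormedAddCommGroup V] [InnerProductSpace ℂ V] [FiniteDimensional ℂ V]
    {n : ℕ} (hdim : Module.finrank ℂ V = n) {h : V →ₗ[ℂ] V}
    (hh : h.IsSymmetric) (p : ℝ) : ℝ :=
  ((∑ i : Fin n, |hh.eigenvalues hdim i| ^ p) / n) ^ (1 / p)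

open Finset Matrix RCLike

theorem ConvexOn.sum_map_mulVec_le {ι : Type*} [Fintype ι] [DecidableEq ι] {s : Set ℝ}
    {φ : ℝ → ℝ} (hφ : ConvexOn ℝ s φ) {M : Matrix ι ι ℝ} (hM : M ∈ doublyStochastic ℝ ι)
    {x : ι → ℝ} (hx : ∀ j, x j ∈ s) :
    ∑ i, φ ((M *ᵥ x) i) ≤ ∑ i, φ (x i) :=
  calc ∑ i, φ ((M *ᵥ x) i) ≤ ∑ i, ∑ j, M i j * φ (x j) := by
        refine sum_le_sum fun i _ => hφ.map_sum_le (fun j _ => nonneg_of_mem_doublyStochastic hM)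
          (sum_row_of_mem_doublyStochastic hM i) fun j _ => hx j
    _ = ∑ j, (∑ i, M i j) * φ (x j) := by
        rw [sum_comm]
        simp_rw [sum_mul]
    _ = ∑ j, φ (x j) := by simp_rw [sum_col_of_mem_doublyStochastic hM, one_mul]

theorem convexOn_abs_rpow {p : ℝ} (hp : 1 ≤ p) : ConvexOn ℝ Set.univ fun x : ℝ => |x| ^ p := by
  refine ⟨convex_univ, fun x _ y _ a b ha hb hab => ?_⟩
  calc |a • x + b • y| ^ p ≤ (a • |x| + b • |y|) ^ p := by
        refine Real.rpow_le_rpow (abs_nonneg _) ?_ (by linarith)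
        simpa [abs_mul, abs_of_nonneg ha, abs_of_nonneg hb] using abs_add_le (a * x) (b * y)
    _ ≤ a • |x| ^ p + b • |y| ^ p :=
        (convexOn_rpow hp).2 (abs_nonneg x) (abs_nonneg y) ha hb hab

theorem Real.Lp_div_add_le {ι : Type*} (s : Finset ι) (f g : ι → ℝ) {p : ℝ} (hp : 1 ≤ p)
    {c : ℝ} (hc : 0 ≤ c) :
    ((∑ i ∈ s, |f i + g i| ^ p) / c) ^ (1 / p) ≤
      ((∑ i ∈ s, |f i| ^ p) / c) ^ (1 / p) + ((∑ i ∈ s, |g i| ^ p) / c) ^ (1 / p) := by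
  have hsum : ∀ u : ι → ℝ, 0 ≤ ∑ i ∈ s, |u i| ^ p := fun u =>
    sum_nonneg fun i _ => Real.rpow_nonneg (abs_nonneg _) p
  simp only [Real.div_rpow (hsum _) hc, ← add_div]
  exact div_le_div_of_nonneg_right (Real.Lp_add_le s f g hp) (Real.rpow_nonneg hc _)

namespace OrthonormalBasis

variable {𝕜 E ι : Type*} [RCLike 𝕜] [NormedAddCommGroup E] [InnerProductSpace 𝕜 E]
  [Fintype ι] [DecidableEq ι]

theorem norm_inner_sq_mem_doublyStochastic (e f : OrthonormalBasis ι 𝕜 E) :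
    Matrix.of (fun i j => ‖(inner 𝕜 (e i) (f j) : 𝕜)‖ ^ 2) ∈ doublyStochastic ℝ ι := by
  refine mem_doublyStochastic_iff_sum.2 ⟨fun _ _ => sq_nonneg _, fun i => ?_, fun j => ?_⟩
  · simp [f.sum_sq_norm_inner_left, e.orthonormal.1 i]
  · simp [e.sum_sq_norm_inner_right, f.orthonormal.1 j]

end OrthonormalBasis

namespace LinearMap.IsSymmetric

variable {𝕜 E : Type*} [RCLike 𝕜] [NormedAddCommGroup E] [InnerProductSpace 𝕜 E]
  [FiniteDimensional 𝕜 E] {n : ℕ} {T : E →ₗ[𝕜] E}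

theorem re_inner_apply_self_eq_sum (hT : T.IsSymmetric) (hn : Module.finrank 𝕜 E = n) (x : E) :
    re (inner 𝕜 x (T x)) =
      ∑ j, ‖(inner 𝕜 x (hT.eigenvectorBasis hn j) : 𝕜)‖ ^ 2 * hT.eigenvalues hn j := by
  set f := hT.eigenvectorBasis hn
  have hcoord (j : Fin n) : (inner 𝕜 (f j) (T x) : 𝕜) = hT.eigenvalues hn j * inner 𝕜 (f j) x := by
    rw [← hT, hT.apply_eigenvectorBasis, inner_smul_left, conj_ofReal]
  rw [← f.sum_inner_mul_inner x (T x), map_sum]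
  refine sum_congr rfl fun j _ => ?_
  rw [hcoord, mul_left_comm, ← inner_conj_symm x (f j), RCLike.conj_mul, norm_conj,
    ← ofReal_pow, ← ofReal_mul, ofReal_re, mul_comm]

theorem eigenvalues_eq_re_inner (hT : T.IsSymmetric) (hn : Module.finrank 𝕜 E = n) (i : Fin n) :
    hT.eigenvalues hn i =
      re (inner 𝕜 (hT.eigenvectorBasis hn i) (T (hT.eigenvectorBasis hn i))) := by
  simp [inner_smul_right, (hT.eigenvectorBasis hn).orthonormal.1 i]

theorem sum_map_re_inner_le (hT : T.IsSymmetric) (hn : Module.finrank 𝕜 E = n) {φ : ℝ → ℝ}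
    (hφ : ConvexOn ℝ Set.univ φ) (e : OrthonormalBasis (Fin n) 𝕜 E) :
    ∑ i, φ (re (inner 𝕜 (e i) (T (e i)))) ≤ ∑ i, φ (hT.eigenvalues hn i) := by
  have := hφ.sum_map_mulVec_le (e.norm_inner_sq_mem_doublyStochastic (hT.eigenvectorBasis hn))
    (x := hT.eigenvalues hn) fun _ => Set.mem_univ _
  simpa [mulVec, dotProduct, hT.re_inner_apply_self_eq_sum hn] using this

end LinearMap.IsSymmetric

theorem pNorm_triangle_of_selfAdjoint_general {V : Type*} [NormedAddCommGroup V]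
    [InnerProductSpace ℂ V] [FiniteDimensional ℂ V] {n : ℕ}
    (hdim : Module.finrank ℂ V = n) (p : ℝ) (hp1 : 1 ≤ p)
    (h₁ h₂ : V →ₗ[ℂ] V) (hh₁ : h₁.IsSymmetric) (hh₂ : h₂.IsSymmetric) :
    symPNorm hdim (hh₁.add hh₂) p ≤ symPNorm hdim hh₁ p + symPNorm hdim hh₂ p := by
  set f := (hh₁.add hh₂).eigenvectorBasis hdim
  have hdiag (T : V →ₗ[ℂ] V) (hT : T.IsSymmetric) :
      ∑ i, |re (inner ℂ (f i) (T (f i)))| ^ p ≤ ∑ i, |hT.eigenvalues hdim i| ^ p :=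
    hT.sum_map_re_inner_le hdim (convexOn_abs_rpow hp1) f
  have hsplit : ∀ i, (hh₁.add hh₂).eigenvalues hdim i =
      re (inner ℂ (f i) (h₁ (f i))) + re (inner ℂ (f i) (h₂ (f i))) := fun i => by
    rw [(hh₁.add hh₂).eigenvalues_eq_re_inner hdim, LinearMap.add_apply, inner_add_right, map_add]
  unfold symPNorm
  simp only [hsplit]
  refine (Real.Lp_div_add_le _ _ _ hp1 n.cast_nonneg).trans (add_le_add ?_ ?_) <;>
    gcongr (?_ / _) ^ _
  exacts [hdiag h₁ hh₁, hdiag h₂ hh₂]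

/-- for `p ∈ [1,∞)`, `‖·‖_p^H` satisfies the triangle inequality on self-adjoint
endomorphisms of an `n`-dimensional complex inner product space (`n ≥ 1`). -/
theorem pNorm_triangle_of_selfAdjoint {V : Type*} [NormedAddCommGroup V]
    [InnerProductSpace ℂ V] [FiniteDimensional ℂ V] {n : ℕ} (hn : 1 ≤ n)
    (hdim : Module.finrank ℂ V = n) (p : ℝ) (hp1 : 1 ≤ p)
    (h₁ h₂ : V →ₗ[ℂ] V) (hh₁ : h₁.IsSymmetric) (hh₂ : h₂.IsSymmetric) :
    symPNorm hdim (hh₁.add hh₂) p ≤ symPNorm hdim hh₁ p + symPNorm hdim hh₂ p :=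
  pNorm_triangle_of_selfAdjoint_general hdim p hp1 h₁ h₂ hh₁ hh₂

end
end

section
/- For any two filtrations 𝓕₁, 𝓕₂ on a finite-dimensional complex vector space V of dimension n ≥ 1, there exists a basis e₁,…,e_n of V which jointly diagonalizes χ_{𝓕₁} and χ_{𝓕₂}: for any scalars λ₁,…,λ_n ∈ ℂ and j = 1,2, one has χ_{𝓕_j}(Σ_{i=1}^n λ_i e_i) = max_{i=1,…,n} χ_{𝓕_j}(λ_i e_i). -/
open scoped BigOperators
open Filter Classical

noncomputable section

variable {V : Type*} [AddCommGroup V] [Module ℂ V]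

/-- A filtration on a complex vector space `V`: a left-continuous, decreasing family of
subspaces which equals `⊤` for `t` small enough and `⊥` for `t` large enough. -/
structure IsVSFiltration (F : ℝ → Submodule ℂ V) : Prop where
  antitone : ∀ ⦃s t : ℝ⦄, s ≤ t → F t ≤ F s
  left_cont : ∀ t : ℝ, ∃ ε > 0, ∀ δ : ℝ, 0 < δ → δ < ε → F (t - δ) = F t
  eventually_top : ∃ t₀ : ℝ, ∀ t ≤ t₀, F t = ⊤
  eventually_bot : ∃ t₁ : ℝ, ∀ t, t₁ ≤ t → F t = ⊥

/-- The weight of a vector with respect to a filtration. -/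
def filtWeight (F : ℝ → Submodule ℂ V) (s : V) : ℝ :=
  sSup {l : ℝ | s ∈ F l}

/-- The non-Archimedean norm `χ_𝓕` associated with a filtration. -/
def filtChi (F : ℝ → Submodule ℂ V) (s : V) : ℝ :=
  if s = 0 then 0 else Real.exp (-(filtWeight F s))

/-- The jumping numbers `e_𝓕(j)` of a filtration. -/
def jumpNum (F : ℝ → Submodule ℂ V) (j : ℕ) : ℝ :=
  sSup {t : ℝ | j ≤ Module.finrank ℂ (F t)}

/-- The norm associated with a Hermitian inner product. -/
def hnorm (c : InnerProductSpace.Core ℂ V) : V → ℝ :=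
  fun v => Real.sqrt ((c.inner v v).re)

/-- The `j`-th element of the logarithmic relative spectrum of two norms. -/
def relSpec (N₀ N₁ : V → ℝ) (j : ℕ) : ℝ :=
  sSup {r : ℝ | ∃ W : Submodule ℂ V, Module.finrank ℂ W = j ∧
    r = sInf {x : ℝ | ∃ w ∈ W, w ≠ 0 ∧ x = Real.log (N₁ w / N₀ w)}}

/-- The distance `d_p` between two norms, `p ∈ [1, ∞)`. -/
def dp (p : ℝ) (N₀ N₁ : V → ℝ) : ℝ :=
  ((∑ j ∈ Finset.Icc 1 (Module.finrank ℂ V), |relSpec N₀ N₁ j| ^ p) /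
    (Module.finrank ℂ V : ℝ)) ^ (1 / p)

/-- The distance `d_∞` between two norms. -/
def dInf (N₀ N₁ : V → ℝ) : ℝ :=
  sSup {r : ℝ | ∃ j ∈ Finset.Icc 1 (Module.finrank ℂ V), r = |relSpec N₀ N₁ j|}

/-- A family of vectors is orthonormal with respect to a Hermitian inner product. -/
def OrthonormalFor (c : InnerProductSpace.Core ℂ V) {ι : Type*} (s : ι → V) : Prop :=
  ∀ i j, c.inner (s i) (s j) = if i = j then 1 else 0

/-- A family of vectors is orthogonal with respect to a Hermitian inner product. -/
def OrthogonalFor (c : InnerProductSpace.Core ℂ V) {ι : Type*} (s : ι → V) : Prop :=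
  ∀ i j, i ≠ j → c.inner (s i) (s j) = 0

/-- `c : ℝ → InnerProductSpace.Core ℂ V` is the geodesic ray of Hermitian norms emanating
from `c 0` associated with the filtration `F` via the adapted orthonormal basis `s`:
`s` is orthonormal for `c 0`, `s j ∈ 𝓕^{e_𝓕(j)} V`, and for each `t ≥ 0` the rescaled basis
`(exp (t e_𝓕(i)) • s i)` is orthonormal for `c t`. -/
def IsGeodesicRayFor (F : ℝ → Submodule ℂ V) {n : ℕ} (s : Fin n → V)
    (c : ℝ → InnerProductSpace.Core ℂ V) : Prop :=
  OrthonormalFor (c 0) s ∧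
  (∀ i : Fin n, s i ∈ F (jumpNum F (i.1 + 1))) ∧
  ∀ t : ℝ, 0 ≤ t → ∀ i j : Fin n,
    (c t).inner (Real.exp (t * jumpNum F (i.1 + 1)) • s i)
      (Real.exp (t * jumpNum F (j.1 + 1)) • s j) = if i = j then 1 else 0

/-- A (complex) norm on a vector space. -/
structure IsComplexNorm (N : V → ℝ) : Prop where
  eq_zero_iff : ∀ x : V, N x = 0 ↔ x = 0
  smul : ∀ (a : ℂ) (x : V), N (a • x) = ‖a‖ * N x
  add_le : ∀ x y : V, N (x + y) ≤ N x + N y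


/-!
Induct on the dimension. By left continuity the smallest nonzero step of `F₁` is attained; take
`v₀ ≠ 0` in it. Every nonzero step of `F₁` then contains `v₀`, so it is the full preimage of its
image in `V ⧸ ℂ v₀`, and *every* lift of a vector of the quotient is optimal for `F₁`. Lifting a
jointly adapted family of the quotient by lifts that are optimal for `F₂` and adding `v₀` gives a
family adapted to both filtrations. Since `χ_𝓕 v ≤ exp (-t) ↔ v ∈ 𝓕^t`, the function `χ_𝓕` is
diagonal in any family adapted to `𝓕`.
-/

open Module

namespace IsVSFiltration

variable {F : ℝ → Submodule ℂ V}

theorem sSup_mem (hF : IsVSFiltration F) {P : Submodule ℂ V → Prop}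
    (hne : {t | P (F t)}.Nonempty) (hbdd : BddAbove {t | P (F t)}) :
    P (F (sSup {t | P (F t)})) := by
  set T := sSup {t | P (F t)}
  obtain ⟨ε, hε, hconst⟩ := hF.left_cont T
  obtain ⟨s, hs, hTs⟩ := exists_lt_of_lt_csSup hne (sub_lt_self T hε)
  rcases (le_csSup hbdd hs).eq_or_lt with rfl | hsT
  · exact hs
  · have hFs := hconst (T - s) (by linarith) (by linarith)
    rw [sub_sub_cancel] at hFs
    rwa [← hFs]

theorem mem_iff_le_filtWeight (hF : IsVSFiltration F) {v : V} (hv : v ≠ 0) (t : ℝ) :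
    v ∈ F t ↔ t ≤ filtWeight F v := by
  have hne : {l | v ∈ F l}.Nonempty := by
    obtain ⟨t₀, ht₀⟩ := hF.eventually_top
    exact ⟨t₀, by simp [ht₀ t₀ le_rfl]⟩
  have hbdd : BddAbove {l | v ∈ F l} := by
    obtain ⟨t₁, ht₁⟩ := hF.eventually_bot
    refine ⟨t₁, fun l hl => le_of_not_gt fun hlt => hv ?_⟩
    simpa [ht₁ l hlt.le] using hl
  exact ⟨fun h => le_csSup hbdd h,
    fun h => hF.antitone h (hF.sSup_mem (P := (v ∈ ·)) hne hbdd)⟩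

theorem exists_ne_zero_forall_mem_of_ne_bot [Nontrivial V] (hF : IsVSFiltration F) :
    ∃ v₀ ≠ 0, ∀ t, F t ≠ ⊥ → v₀ ∈ F t := by
  have hne : {t | F t ≠ ⊥}.Nonempty := by
    obtain ⟨t₀, ht₀⟩ := hF.eventually_top
    exact ⟨t₀, by simp [ht₀ t₀ le_rfl]⟩
  have hbdd : BddAbove {t | F t ≠ ⊥} := by
    obtain ⟨t₁, ht₁⟩ := hF.eventually_bot
    exact ⟨t₁, fun t ht => le_of_not_gt fun hlt => ht (ht₁ t hlt.le)⟩
  obtain ⟨v₀, hv₀, hv₀_ne⟩ :=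
    Submodule.exists_mem_ne_zero_of_ne_bot (hF.sSup_mem (P := (· ≠ ⊥)) hne hbdd)
  exact ⟨v₀, hv₀_ne, fun t ht => hF.antitone (le_csSup hbdd ht) hv₀⟩

variable {W : Type*} [AddCommGroup W] [Module ℂ W]

theorem map (hF : IsVSFiltration F) {π : V →ₗ[ℂ] W} (hπ : Function.Surjective π) :
    IsVSFiltration fun t => (F t).map π where
  antitone _ _ hst := Submodule.map_mono (hF.antitone hst)
  left_cont t := by
    obtain ⟨ε, hε, hconst⟩ := hF.left_cont t
    exact ⟨ε, hε, fun δ hδ hδε => by rw [hconst δ hδ hδε]⟩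
  eventually_top := by
    obtain ⟨t₀, ht₀⟩ := hF.eventually_top
    exact ⟨t₀, fun t ht => by rw [ht₀ t ht, Submodule.map_top, LinearMap.range_eq_top.mpr hπ]⟩
  eventually_bot := by
    obtain ⟨t₁, ht₁⟩ := hF.eventually_bot
    exact ⟨t₁, fun t ht => by rw [ht₁ t ht, Submodule.map_bot]⟩

/-- A lift taken in the step of `F` at the weight of `w` for the image filtration. -/
theorem exists_lift_forall_mem (hF : IsVSFiltration F) {π : V →ₗ[ℂ] W}
    (hπ : Function.Surjective π) (w : W) :
    ∃ v, π v = w ∧ ∀ t, w ∈ (F t).map π → v ∈ F t := by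
  rcases eq_or_ne w 0 with rfl | hw
  · exact ⟨0, map_zero π, fun t _ => zero_mem _⟩
  have hGw := (hF.map hπ).mem_iff_le_filtWeight hw
  obtain ⟨v, hv, rfl⟩ := Submodule.mem_map.mp ((hGw _).mpr le_rfl)
  exact ⟨v, rfl, fun t ht => hF.antitone ((hGw t).mp ht) hv⟩

end IsVSFiltration

theorem mem_of_mkQ_mem_map_of_ne_bot {F : ℝ → Submodule ℂ V} {v₀ : V}
    (hv₀ : ∀ t, F t ≠ ⊥ → v₀ ∈ F t) {x : V} {t : ℝ} (hx : (ℂ ∙ v₀).mkQ x ≠ 0)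
    (h : (ℂ ∙ v₀).mkQ x ∈ (F t).map (ℂ ∙ v₀).mkQ) : x ∈ F t := by
  have hFt : F t ≠ ⊥ := fun hbot => hx (by simpa [hbot] using h)
  have hle : ℂ ∙ v₀ ≤ F t := (Submodule.span_singleton_le_iff_mem _ _).mpr (hv₀ t hFt)
  rw [← Submodule.mem_comap, Submodule.comap_map_mkQ, sup_eq_right.mpr hle] at h
  exact h

/-- For a basis `e`, this says that every step `F t` is spanned by the `e i` it contains. -/
def IsAdapted (F : ℝ → Submodule ℂ V) {ι : Type*} [Fintype ι] (e : ι → V) : Prop :=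
  ∀ t (lam : ι → ℂ), ∑ i, lam i • e i ∈ F t → ∀ i, lam i • e i ∈ F t

namespace IsAdapted

variable {F : ℝ → Submodule ℂ V}

theorem cons {W : Type*} [AddCommGroup W] [Module ℂ W] {π : V →ₗ[ℂ] W} {v₀ : V}
    (hv₀ : π v₀ = 0) {n : ℕ} {b : Fin n → W} (hb : IsAdapted (fun t => (F t).map π) b)
    {f : Fin n → V} (hfb : ∀ i, π (f i) = b i) (hlift : ∀ i t, b i ∈ (F t).map π → f i ∈ F t) :
    IsAdapted F (Fin.cons v₀ f : Fin (n + 1) → V) := by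
  intro t lam hx
  have hsum : ∑ i, lam i • (Fin.cons v₀ f : Fin (n + 1) → V) i =
      lam 0 • v₀ + ∑ i, lam i.succ • f i := by
    simp [Fin.sum_univ_succ]
  have htail : ∀ i, lam i.succ • f i ∈ F t := by
    have himage : ∑ i, lam i.succ • b i ∈ (F t).map π :=
      ⟨_, hx, by simp [hsum, hv₀, hfb]⟩
    intro i
    rcases eq_or_ne (lam i.succ) 0 with hi | hi
    · simp [hi]
    · exact Submodule.smul_mem _ _
        (hlift i t ((Submodule.smul_mem_iff _ hi).mp (hb t _ himage i)))
  have hhead : lam 0 • v₀ ∈ F t := by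
    rw [hsum] at hx
    simpa using sub_mem hx (sum_mem (t := Finset.univ) fun i _ => htail i)
  intro i
  cases i using Fin.cases with
  | zero => simpa using hhead
  | succ i => simpa using htail i

variable {ι : Type*} [Fintype ι] {e : ι → V}

theorem linearIndependent (hF : IsVSFiltration F) (he : IsAdapted F e) (he₀ : ∀ i, e i ≠ 0) :
    LinearIndependent ℂ e := by
  obtain ⟨t₁, ht₁⟩ := hF.eventually_bot
  refine Fintype.linearIndependent_iff.mpr fun g hg i => ?_
  have hgi := he t₁ g (hg ▸ zero_mem _) i
  rw [ht₁ t₁ le_rfl, Submodule.mem_bot, smul_eq_zero] at hgi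
  exact hgi.resolve_right (he₀ i)

end IsAdapted

theorem exists_isAdapted_isAdapted [FiniteDimensional ℂ V] {F₁ F₂ : ℝ → Submodule ℂ V}
    (hF₁ : IsVSFiltration F₁) (hF₂ : IsVSFiltration F₂) {n : ℕ} (hdim : finrank ℂ V = n) :
    ∃ e : Fin n → V, (∀ i, e i ≠ 0) ∧ IsAdapted F₁ e ∧ IsAdapted F₂ e := by
  induction n generalizing V with
  | zero => exact ⟨Fin.elim0, fun i => i.elim0, fun _ _ _ i => i.elim0, fun _ _ _ i => i.elim0⟩
  | succ n ih =>
    have : Nontrivial V := nontrivial_of_finrank_eq_succ hdim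
    obtain ⟨v₀, hv₀, hv₀F₁⟩ := hF₁.exists_ne_zero_forall_mem_of_ne_bot
    set p := ℂ ∙ v₀
    have hpv₀ : p.mkQ v₀ = 0 := (Submodule.Quotient.mk_eq_zero p).mpr (Submodule.mem_span_singleton_self v₀)
    have hdimQ : finrank ℂ (V ⧸ p) = n := by
      have := p.finrank_quotient_add_finrank
      rw [finrank_span_singleton hv₀] at this
      omega
    obtain ⟨b, hb₀, hb₁, hb₂⟩ :=
      ih (hF₁.map p.mkQ_surjective) (hF₂.map p.mkQ_surjective) hdimQ
    choose f hfb hf₂ using fun i => hF₂.exists_lift_forall_mem p.mkQ_surjective (b i)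
    have hf₀ : ∀ i, f i ≠ 0 := fun i hfi => hb₀ i (by rw [← hfb i, hfi, map_zero])
    refine ⟨Fin.cons v₀ f, fun i => ?_, hb₁.cons hpv₀ hfb fun i t h => ?_, hb₂.cons hpv₀ hfb hf₂⟩
    · cases i using Fin.cases with
      | zero => simpa using hv₀
      | succ i => simpa using hf₀ i
    · rw [← hfb i] at h
      exact mem_of_mkQ_mem_map_of_ne_bot hv₀F₁ (by rw [hfb i]; exact hb₀ i) h

theorem filtChi_nonneg (F : ℝ → Submodule ℂ V) (v : V) : 0 ≤ filtChi F v := by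
  unfold filtChi
  split_ifs <;> positivity

theorem IsVSFiltration.filtChi_le_iff {F : ℝ → Submodule ℂ V} (hF : IsVSFiltration F) {v : V}
    {r : ℝ} (hr : 0 < r) : filtChi F v ≤ r ↔ v ∈ F (-Real.log r) := by
  rcases eq_or_ne v 0 with rfl | hv
  · simp [filtChi, hr.le]
  · rw [filtChi, if_neg hv, hF.mem_iff_le_filtWeight hv, ← Real.le_log_iff_exp_le hr, neg_le]

theorem IsAdapted.filtChi_sum_eq_iSup {F : ℝ → Submodule ℂ V} {ι : Type*} [Fintype ι]
    {e : ι → V} (hF : IsVSFiltration F) (he : IsAdapted F e) (lam : ι → ℂ) :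
    filtChi F (∑ i, lam i • e i) = ⨆ i, filtChi F (lam i • e i) := by
  have hle_iff : ∀ r > 0,
      filtChi F (∑ i, lam i • e i) ≤ r ↔ ∀ i, filtChi F (lam i • e i) ≤ r := by
    intro r hr
    simp only [hF.filtChi_le_iff hr]
    exact ⟨he _ lam, fun h => sum_mem fun i _ => h i⟩
  have hbdd : BddAbove (Set.range fun i => filtChi F (lam i • e i)) :=
    (Set.finite_range _).bddAbove
  have hsup_nonneg : 0 ≤ ⨆ i, filtChi F (lam i • e i) :=
    Real.iSup_nonneg fun i => filtChi_nonneg F _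
  apply le_antisymm
  · refine le_of_forall_gt_imp_ge_of_dense fun r hr => ?_
    exact (hle_iff r (hsup_nonneg.trans_lt hr)).mpr fun i => (le_ciSup hbdd i).trans hr.le
  · refine le_of_forall_gt_imp_ge_of_dense fun r hr => ?_
    have hr₀ : 0 < r := (filtChi_nonneg F _).trans_lt hr
    exact Real.iSup_le ((hle_iff r hr₀).mp hr.le) hr₀.le

theorem exists_jointly_diagonalizing_basis_general
    {V : Type*} [AddCommGroup V] [Module ℂ V] [FiniteDimensional ℂ V]
    {n : ℕ} (hdim : Module.finrank ℂ V = n)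
    (F₁ F₂ : ℝ → Submodule ℂ V) (hF₁ : IsVSFiltration F₁) (hF₂ : IsVSFiltration F₂) :
    ∃ e : Module.Basis (Fin n) ℂ V, ∀ lam : Fin n → ℂ,
      filtChi F₁ (∑ i, lam i • e i) = ⨆ i, filtChi F₁ (lam i • e i) ∧
      filtChi F₂ (∑ i, lam i • e i) = ⨆ i, filtChi F₂ (lam i • e i) := by
  obtain ⟨e, he₀, he₁, he₂⟩ := exists_isAdapted_isAdapted hF₁ hF₂ hdim
  refine ⟨basisOfLinearIndependentOfCardEqFinrank' e (he₁.linearIndependent hF₁ he₀)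
    (by simp [hdim]), fun lam => ?_⟩
  simp only [coe_basisOfLinearIndependentOfCardEqFinrank']
  exact ⟨he₁.filtChi_sum_eq_iSup hF₁ lam, he₂.filtChi_sum_eq_iSup hF₂ lam⟩

/-- any two filtrations on a finite-dimensional complex vector space of
dimension `n ≥ 1` admit a jointly diagonalizing basis. -/
theorem exists_jointly_diagonalizing_basis
    {V : Type*} [AddCommGroup V] [Module ℂ V] [FiniteDimensional ℂ V]
    {n : ℕ} (hn : 1 ≤ n) (hdim : Module.finrank ℂ V = n)
    (F₁ F₂ : ℝ → Submodule ℂ V) (hF₁ : IsVSFiltration F₁) (hF₂ : IsVSFiltration F₂) :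
    ∃ e : Module.Basis (Fin n) ℂ V, ∀ lam : Fin n → ℂ,
      filtChi F₁ (∑ i, lam i • e i) = ⨆ i, filtChi F₁ (lam i • e i) ∧
      filtChi F₂ (∑ i, lam i • e i) = ⨆ i, filtChi F₂ (lam i • e i) :=
  exists_jointly_diagonalizing_basis_general hdim F₁ F₂ hF₁ hF₂

end
end

section
/- Let V be a finite-dimensional complex vector space, 𝓕 a filtration on V, H₀ a Hermitian norm on V, and H_t^𝓕 (t ≥ 0) the geodesic ray of Hermitian norms emanating from H₀ associated with 𝓕 via an adapted orthonormal basis. Then for every f ∈ V, f ≠ 0, the limit lim_{t→∞} (1/t)·log‖f‖_{H_t^𝓕} exists and equals log χ_𝓕(f) = −w_𝓕(f). -/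
open scoped BigOperators
open Filter Classical

noncomputable section

variable {V : Type*} [AddCommGroup V] [Module ℂ V]

/-- A filtration on a complex vector space `V`: a left-continuous, decreasing family of
subspaces which equals `⊤` for `t` small enough and `⊥` for `t` large enough. -/
structure IsVecFiltration (F : ℝ → Submodule ℂ V) : Prop where
  antitone : ∀ ⦃s t : ℝ⦄, s ≤ t → F t ≤ F s
  left_cont : ∀ t : ℝ, ∃ ε > 0, ∀ δ : ℝ, 0 < δ → δ < ε → F (t - δ) = F t
  eventually_top : ∃ t₀ : ℝ, ∀ t ≤ t₀, F t = ⊤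
  eventually_bot : ∃ t₁ : ℝ, ∀ t, t₁ ≤ t → F t = ⊥

/-! Write `f = ∑ aᵢ bᵢ` in the adapted basis. Since the `e^{t e_𝓕(i+1)} bᵢ` are
`H_t`-orthonormal, `‖f‖²_{H_t} = ∑ |aᵢ|² e^{-2t e_𝓕(i+1)}`, and the term with the smallest
jumping number dominates: `(1/t) log ‖f‖_{H_t} → -min {e_𝓕(i+1) | aᵢ ≠ 0}`. That minimum is
the weight of `f`, because a dimension count shows that `𝓕^l V` is spanned by the `bᵢ` with
`l ≤ e_𝓕(i+1)`. -/

open Finset Topology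

theorem log_filtChi {F : ℝ → Submodule ℂ V} {f : V} (hf : f ≠ 0) :
    Real.log (filtChi F f) = -filtWeight F f := by
  rw [filtChi, if_neg hf, Real.log_exp]

section Filtration

variable {F : ℝ → Submodule ℂ V}

theorem IsVecFiltration.le_jumpNum (hF : IsVecFiltration F) {j : ℕ} (hj : 1 ≤ j) {t : ℝ}
    (ht : j ≤ Module.finrank ℂ (F t)) : t ≤ jumpNum F j := by
  obtain ⟨t₁, hbot⟩ := hF.eventually_bot
  refine le_csSup ⟨t₁, fun s hs => ?_⟩ ht
  by_contra! hlt
  have hs' : j ≤ Module.finrank ℂ (F s) := hs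
  rw [hbot s hlt.le, finrank_bot] at hs'
  omega

variable {n : ℕ}

theorem IsVecFiltration.finrank_le_card_filter (hF : IsVecFiltration F)
    (b : Module.Basis (Fin n) ℂ V) (l : ℝ) :
    Module.finrank ℂ (F l) ≤ #{i : Fin n | l ≤ jumpNum F (i.1 + 1)} := by
  have := Module.Finite.of_basis b
  set k := Module.finrank ℂ (F l)
  have hkn : k ≤ n := by
    simpa [Module.finrank_eq_card_basis b] using Submodule.finrank_le (F l)
  calc k = #{i : Fin n | i.1 < k} := by rw [Fin.card_filter_val_lt, min_eq_right hkn]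
    _ ≤ #{i : Fin n | l ≤ jumpNum F (i.1 + 1)} :=
      card_le_card fun i hi => by
        simp only [mem_filter, mem_univ, true_and] at hi ⊢
        exact hF.le_jumpNum (by omega) (by omega)

theorem IsVecFiltration.span_image_eq (hF : IsVecFiltration F) (b : Module.Basis (Fin n) ℂ V)
    (hb : ∀ i : Fin n, b i ∈ F (jumpNum F (i.1 + 1))) (l : ℝ) :
    Submodule.span ℂ (b '' {i | l ≤ jumpNum F (i.1 + 1)}) = F l := by
  have := Module.Finite.of_basis b
  refine Submodule.eq_of_le_of_finrank_le ?_ ?_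
  · rw [Submodule.span_le]
    rintro _ ⟨i, hi, rfl⟩
    exact hF.antitone hi (hb i)
  · have hcard : Module.finrank ℂ (Submodule.span ℂ (b '' {i | l ≤ jumpNum F (i.1 + 1)})) =
        #{i : Fin n | l ≤ jumpNum F (i.1 + 1)} := by
      rw [Set.image_eq_range]
      exact (finrank_span_eq_card (b.linearIndependent.comp _ Subtype.val_injective)).trans
        (by simp [Fintype.card_subtype])
    exact hcard ▸ hF.finrank_le_card_filter b l

theorem IsVecFiltration.mem_iff_forall_mem_support (hF : IsVecFiltration F)
    (b : Module.Basis (Fin n) ℂ V) (hb : ∀ i : Fin n, b i ∈ F (jumpNum F (i.1 + 1)))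
    (f : V) (l : ℝ) :
    f ∈ F l ↔ ∀ i ∈ (b.repr f).support, l ≤ jumpNum F (i.1 + 1) := by
  rw [← hF.span_image_eq b hb l, b.mem_span_image]
  rfl

theorem IsVecFiltration.filtWeight_eq_inf' (hF : IsVecFiltration F)
    (b : Module.Basis (Fin n) ℂ V) (hb : ∀ i : Fin n, b i ∈ F (jumpNum F (i.1 + 1)))
    {f : V} (hS : (b.repr f).support.Nonempty) :
    filtWeight F f = (b.repr f).support.inf' hS fun i => jumpNum F (i.1 + 1) := by
  have hlevels :
      {l | f ∈ F l} = Set.Iic ((b.repr f).support.inf' hS fun i => jumpNum F (i.1 + 1)) := by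
    ext l
    simp only [Set.mem_ofPred_eq, Set.mem_Iic, le_inf'_iff, hF.mem_iff_forall_mem_support b hb]
  rw [filtWeight, hlevels, csSup_Iic]

end Filtration

theorem tendsto_div_atTop_of_sub_mul_bounded {g : ℝ → ℝ} {L a b : ℝ}
    (h : ∀ᶠ u in atTop, a + u * L ≤ g u ∧ g u ≤ b + u * L) :
    Tendsto (fun u => g u / u) atTop (𝓝 L) := by
  have hlim : ∀ a : ℝ, Tendsto (fun u => a / u + L) atTop (𝓝 L) := fun a => by
    simpa using tendsto_const_nhds.div_atTop tendsto_id |>.add_const L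
  refine tendsto_of_tendsto_of_tendsto_of_le_of_le' (hlim a) (hlim b) ?_ ?_ <;>
  filter_upwards [h, eventually_gt_atTop 0] with u ⟨hlow, hup⟩ hu
  · rw [div_add' _ _ _ hu.ne', mul_comm L]
    exact div_le_div_of_nonneg_right hlow hu.le
  · rw [div_add' _ _ _ hu.ne', mul_comm L]
    exact div_le_div_of_nonneg_right hup hu.le

theorem tendsto_log_sum_mul_exp_div {ι : Type*} (s : Finset ι) (hs : s.Nonempty) (w e : ι → ℝ)
    (hw : ∀ i ∈ s, 0 < w i) :
    Tendsto (fun u => Real.log (∑ i ∈ s, w i * Real.exp (-(u * e i))) / u) atTop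
      (𝓝 (-s.inf' hs e)) := by
  obtain ⟨i₀, hi₀, hm⟩ := s.exists_mem_eq_inf' hs e
  rw [hm]
  have hW : 0 < ∑ i ∈ s, w i := sum_pos hw hs
  refine tendsto_div_atTop_of_sub_mul_bounded
    (a := Real.log (w i₀)) (b := Real.log (∑ i ∈ s, w i)) ?_
  filter_upwards [eventually_ge_atTop 0] with u hu
  have hlow : w i₀ * Real.exp (u * -e i₀) ≤ ∑ i ∈ s, w i * Real.exp (-(u * e i)) := by
    rw [mul_neg]
    exact single_le_sum (f := fun i => w i * Real.exp (-(u * e i)))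
      (fun i hi => (mul_pos (hw i hi) (Real.exp_pos _)).le) hi₀
  have hup : ∑ i ∈ s, w i * Real.exp (-(u * e i)) ≤ (∑ i ∈ s, w i) * Real.exp (u * -e i₀) := by
    rw [sum_mul]
    refine sum_le_sum fun i hi => mul_le_mul_of_nonneg_left ?_ (hw i hi).le
    exact Real.exp_le_exp.2 (by nlinarith [hm ▸ s.inf'_le e hi])
  have hpos : 0 < w i₀ * Real.exp (u * -e i₀) := mul_pos (hw i₀ hi₀) (Real.exp_pos _)
  constructor
  · simpa [Real.log_mul (hw i₀ hi₀).ne', Real.log_exp] using Real.log_le_log hpos hlow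
  · simpa [Real.log_mul hW.ne', Real.log_exp] using Real.log_le_log (hpos.trans_le hlow) hup

theorem OrthonormalFor.hnorm_sum_smul_sq {c : InnerProductSpace.Core ℂ V} {ι : Type*}
    {v : ι → V} (hv : OrthonormalFor c v) (s : Finset ι) (a : ι → ℂ) :
    hnorm c (∑ i ∈ s, a i • v i) ^ 2 = ∑ i ∈ s, ‖a i‖ ^ 2 := by
  let : NormedAddCommGroup V := c.toNormedAddCommGroup
  let : InnerProductSpace ℂ V := InnerProductSpace.ofCore c.toCore
  have hv' : Orthonormal ℂ v := orthonormal_iff_ite.2 hv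
  have hnorm_eq : ∀ x, hnorm c x = ‖x‖ := fun _ => rfl
  rw [hnorm_eq, @norm_sq_eq_re_inner ℂ, hv'.inner_sum]
  simp [Complex.conj_mul', ← Complex.ofReal_pow]

theorem IsGeodesicRayFor.hnorm_sq {F : ℝ → Submodule ℂ V} {n : ℕ} {b : Module.Basis (Fin n) ℂ V}
    {c : ℝ → InnerProductSpace.Core ℂ V} (hray : IsGeodesicRayFor F b c) {t : ℝ} (ht : 0 ≤ t)
    (f : V) :
    hnorm (c t) f ^ 2 = ∑ i ∈ (b.repr f).support,
      ‖b.repr f i‖ ^ 2 * Real.exp (-(2 * t * jumpNum F (i.1 + 1))) := by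
  set e : Fin n → ℝ := fun i => t * jumpNum F (i.1 + 1)
  have hf : f = ∑ i ∈ (b.repr f).support,
      (b.repr f i * (Real.exp (-e i) : ℂ)) • (Real.exp (e i) • b i) := by
    conv_lhs => rw [← b.linearCombination_repr f, Finsupp.linearCombination_apply, Finsupp.sum]
    refine sum_congr rfl fun i _ => ?_
    rw [← Complex.coe_smul, smul_smul, mul_assoc, ← Complex.ofReal_mul, ← Real.exp_add,
      neg_add_cancel, Real.exp_zero, Complex.ofReal_one, mul_one]
  -- `convert` reconciles the `Decidable (i = j)` instances of the two definitions
  have hv : OrthonormalFor (c t) fun i => Real.exp (e i) • b i := fun i j => by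
    convert hray.2.2 t ht i j
  rw [congrArg (hnorm (c t) · ^ 2) hf, hv.hnorm_sum_smul_sq]
  refine sum_congr rfl fun i _ => ?_
  rw [norm_mul, mul_pow, Complex.norm_real, Real.norm_of_nonneg (Real.exp_pos _).le,
    ← Real.exp_nat_mul]
  simp only [e]
  ring_nf

theorem geodesic_ray_log_norm_tendsto_general
    {V : Type*} [AddCommGroup V] [Module ℂ V]
    {n : ℕ} (F : ℝ → Submodule ℂ V) (hF : IsVecFiltration F)
    (b : Module.Basis (Fin n) ℂ V) (c : ℝ → InnerProductSpace.Core ℂ V)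
    (hray : IsGeodesicRayFor F (⇑b) c) (f : V) (hf : f ≠ 0) :
    Filter.Tendsto (fun t : ℝ => Real.log (hnorm (c t) f) / t) Filter.atTop
      (nhds (Real.log (filtChi F f))) ∧
    Real.log (filtChi F f) = -(filtWeight F f) := by
  have hS : (b.repr f).support.Nonempty := by
    simpa [Finsupp.support_nonempty_iff] using hf
  refine ⟨?_, log_filtChi hf⟩
  rw [log_filtChi hf, hF.filtWeight_eq_inf' b hray.2.1 hS]
  have hlaplace := (tendsto_log_sum_mul_exp_div _ hS (fun i => ‖b.repr f i‖ ^ 2)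
    (fun i => jumpNum F (i.1 + 1)) fun i hi =>
      pow_pos (norm_pos_iff.2 (Finsupp.mem_support_iff.1 hi)) 2).comp
    (tendsto_id.const_mul_atTop two_pos)
  refine hlaplace.congr' ?_
  filter_upwards [eventually_gt_atTop 0] with t ht
  rw [Function.comp_apply, id, ← hray.hnorm_sq ht.le, Real.log_pow]
  field_simp
  ring

/-- along the geodesic ray of Hermitian norms associated with a filtration `F`
and emanating from `H₀`, for every `f ≠ 0` the limit `lim_{t→∞} (log ‖f‖_{H_t^𝓕}) / t`
exists and equals `log χ_𝓕(f) = -w_𝓕(f)`. -/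
theorem geodesic_ray_log_norm_tendsto
    {V : Type*} [AddCommGroup V] [Module ℂ V] [FiniteDimensional ℂ V]
    {n : ℕ} (F : ℝ → Submodule ℂ V) (hF : IsVecFiltration F)
    (b : Module.Basis (Fin n) ℂ V) (c : ℝ → InnerProductSpace.Core ℂ V)
    (hray : IsGeodesicRayFor F (⇑b) c) (f : V) (hf : f ≠ 0) :
    Filter.Tendsto (fun t : ℝ => Real.log (hnorm (c t) f) / t) Filter.atTop
      (nhds (Real.log (filtChi F f))) ∧
    Real.log (filtChi F f) = -(filtWeight F f) :=
  geodesic_ray_log_norm_tendsto_general F hF b c hray f hf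

end
end

section
/- Let V be an n-dimensional complex vector space (n ≥ 1) and let H₀, H₁, H₂ be Hermitian norms on V such that H₀ ≤ H₂ and H₁ ≤ H₂ pointwise. Then for every p ∈ [1,∞): d_p(H₀, H₁)^p ≤ d_p(H₀, H₂)^p + d_p(H₁, H₂)^p. -/
open scoped BigOperators
open Filter Classical

noncomputable section

variable {V : Type*} [AddCommGroup V] [Module ℂ V]

/-- A filtration on a complex vector space `V`: a left-continuous, decreasing family of
subspaces which equals `⊤` for `t` small enough and `⊥` for `t` large enough. -/
structure IsFiltration' (F : ℝ → Submodule ℂ V) : Prop where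
  antitone : ∀ ⦃s t : ℝ⦄, s ≤ t → F t ≤ F s
  left_cont : ∀ t : ℝ, ∃ ε > 0, ∀ δ : ℝ, 0 < δ → δ < ε → F (t - δ) = F t
  eventually_top : ∃ t₀ : ℝ, ∀ t ≤ t₀, F t = ⊤
  eventually_bot : ∃ t₁ : ℝ, ∀ t, t₁ ≤ t → F t = ⊥

/-! Diagonalise `H₂` against `H₁`: take an `H₁`-orthonormal basis in which
`H₂² = ∑ λᵢ |aᵢ|²` with `λ₁ ≥ ⋯ ≥ λₙ`, and put `λ := λ_{n+1-j}`. The span of the last `j`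
basis vectors is a `j`-dimensional subspace on which `H₂ ≤ √λ H₁`, hence `H₀ ≤ √λ H₁` since
`H₀ ≤ H₂`, so `-log √λ ≤ μ_j(H₀,H₁)`; the span of the first `n+1-j` basis vectors is one on
which `√λ H₁ ≤ H₂`, so `log √λ ≤ μ_{n+1-j}(H₁,H₂)`. Thus `-μ_{n+1-j}(H₁,H₂) ≤ μ_j(H₀,H₁)`,
while `H₁ ≤ H₂` gives `μ_j(H₀,H₁) ≤ μ_j(H₀,H₂)`. Hence
`|μ_j(H₀,H₁)|^p ≤ |μ_j(H₀,H₂)|^p + |μ_{n+1-j}(H₁,H₂)|^p`, and summing over `j` gives the claim. -/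

open Module Submodule
open scoped InnerProductSpace

lemma Finset.sum_Icc_reflect {M : Type*} [AddCommMonoid M] (f : ℕ → M) (n : ℕ) :
    ∑ j ∈ Icc 1 n, f (n + 1 - j) = ∑ j ∈ Icc 1 n, f j := by
  rw [← Ico_add_one_right_eq_Icc, sum_Ico_reflect f 1 (Nat.le_succ _)]
  simp

lemma abs_rpow_le_abs_rpow_add_abs_rpow {x a b p : ℝ} (hp : 0 ≤ p) (hxa : x ≤ a)
    (hbx : -b ≤ x) : |x| ^ p ≤ |a| ^ p + |b| ^ p := by
  rcases le_total 0 x with hx | hx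
  · have hxa' : |x| ≤ |a| := abs_le_abs_of_nonneg hx hxa
    calc |x| ^ p ≤ |a| ^ p := Real.rpow_le_rpow (abs_nonneg x) hxa' hp
      _ ≤ |a| ^ p + |b| ^ p := le_add_of_nonneg_right (by positivity)
  · have hxb : |x| ≤ |b| := (abs_of_nonpos hx).trans_le ((neg_le.1 hbx).trans (le_abs_self b))
    calc |x| ^ p ≤ |b| ^ p := Real.rpow_le_rpow (abs_nonneg x) hxb hp
      _ ≤ |a| ^ p + |b| ^ p := le_add_of_nonneg_left (by positivity)

lemma Module.Basis.finrank_span_image {K M ι : Type*} [DivisionRing K] [AddCommGroup M]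
    [Module K M] (b : Basis ι K M) (s : Finset ι) : finrank K (span K (b '' s)) = s.card := by
  rw [← Finset.coe_image, finrank_span_finset_eq_card, Finset.card_image_of_injective _ b.injective]
  simpa only [Finset.coe_image] using (b.linearIndependent.linearIndepOn _).id_image

lemma exists_submodule_finrank_eq {K M : Type*} [DivisionRing K] [AddCommGroup M] [Module K M]
    [FiniteDimensional K M] {j : ℕ} (hj : j ≤ finrank K M) :
    ∃ W : Submodule K M, finrank K W = j := by
  obtain ⟨s, -, hs⟩ :=
    Finset.exists_subset_card_eq (s := (Finset.univ : Finset (Fin (finrank K M))))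
      (by simpa using hj)
  exact ⟨_, ((finBasis K M).finrank_span_image s).trans hs⟩

lemma Module.Basis.sum_mul_norm_repr_sq_le {R M ι : Type*} [NormedRing R] [AddCommGroup M]
    [Module R M] [Fintype ι] (b : Basis ι R M) {s : Set ι} {f g : ι → ℝ}
    (hfg : ∀ i ∈ s, f i ≤ g i) {v : M} (hv : v ∈ span R (b '' s)) :
    ∑ i, f i * ‖b.repr v i‖ ^ 2 ≤ ∑ i, g i * ‖b.repr v i‖ ^ 2 := by
  refine Finset.sum_le_sum fun i _ => ?_
  by_cases hi : i ∈ s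
  · gcongr
    exact hfg i hi
  · have : b.repr v i = 0 := Finsupp.notMem_support_iff.1 fun h => hi (b.mem_span_image.1 hv h)
    simp [this]

section Diagonalization

variable {E : Type*} [NormedAddCommGroup E] [InnerProductSpace ℂ E] [FiniteDimensional ℂ E]

lemma exists_isSymmetric_inner_eq (c : InnerProductSpace.Core ℂ E) :
    ∃ T : E →ₗ[ℂ] E, T.IsSymmetric ∧ ∀ u v, ⟪u, T v⟫_ℂ = c.inner u v := by
  let b := stdOrthonormalBasis ℂ E
  let T : E →ₗ[ℂ] E :=
    { toFun v := ∑ i, c.inner (b i) v • b i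
      map_add' x y := by
        simp only [InnerProductSpace.Core.inner_add_right (c := c.toCore), add_smul,
          Finset.sum_add_distrib]
      map_smul' r x := by
        simp only [InnerProductSpace.Core.inner_smul_right (c := c.toCore), RingHom.id_apply,
          Finset.smul_sum, smul_smul] }
  have hT (u v : E) : ⟪u, T v⟫_ℂ = c.inner u v := by
    let φ : E →+ ℂ := AddMonoidHom.mk' (c.inner · v) fun x y => c.add_left x y v
    calc ⟪u, T v⟫_ℂ = ∑ i, (starRingEnd ℂ) ⟪b i, u⟫_ℂ * c.inner (b i) v := by
          simp only [T, LinearMap.coe_mk, AddHom.coe_mk, inner_sum, inner_smul_right,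
            inner_conj_symm, mul_comm]
      _ = φ (∑ i, ⟪b i, u⟫_ℂ • b i) := by simp [φ, map_sum, c.smul_left]
      _ = c.inner u v := by rw [b.sum_repr']; rfl
  refine ⟨T, fun u v => ?_, hT⟩
  rw [← inner_conj_symm, hT, c.conj_inner_symm, hT]

lemma exists_orthonormalBasis_re_inner_eq_sum (c : InnerProductSpace.Core ℂ E) :
    ∃ (b : OrthonormalBasis (Fin (finrank ℂ E)) ℂ E) (μ : Fin (finrank ℂ E) → ℝ), Antitone μ ∧
      ∀ v, (c.inner v v).re = ∑ i, μ i * ‖b.repr v i‖ ^ 2 := by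
  obtain ⟨T, hT, hTc⟩ := exists_isSymmetric_inner_eq c
  refine ⟨hT.eigenvectorBasis rfl, hT.eigenvalues rfl, hT.eigenvalues_antitone rfl, fun v => ?_⟩
  rw [← hTc, ← (hT.eigenvectorBasis rfl).sum_inner_mul_inner, Complex.re_sum]
  refine Finset.sum_congr rfl fun i _ => ?_
  rw [← OrthonormalBasis.repr_apply_apply, hT.eigenvectorBasis_apply_self_apply,
    ← inner_conj_symm, OrthonormalBasis.repr_apply_apply, mul_left_comm, RCLike.conj_mul]
  norm_cast

end Diagonalization

section HermitianNorm

lemma hnorm_pos (c : InnerProductSpace.Core ℂ V) {v : V} (hv : v ≠ 0) : 0 < hnorm c v :=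
  letI := c.toNormedAddCommGroup
  norm_pos_iff.2 hv

lemma hnorm_nonneg (c : InnerProductSpace.Core ℂ V) (v : V) : 0 ≤ hnorm c v :=
  Real.sqrt_nonneg _

variable [FiniteDimensional ℂ V]

lemma exists_basis_hnorm_sq_eq_sum (c₁ c₂ : InnerProductSpace.Core ℂ V) :
    ∃ (b : Basis (Fin (finrank ℂ V)) ℂ V) (μ : Fin (finrank ℂ V) → ℝ), Antitone μ ∧
      (∀ i, 0 < μ i) ∧ ∀ v, hnorm c₁ v ^ 2 = ∑ i, ‖b.repr v i‖ ^ 2 ∧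
        hnorm c₂ v ^ 2 = ∑ i, μ i * ‖b.repr v i‖ ^ 2 := by
  let := c₁.toNormedAddCommGroup
  let := InnerProductSpace.ofCore c₁.toCore
  obtain ⟨b, μ, hμ, hc₂⟩ := exists_orthonormalBasis_re_inner_eq_sum c₂
  have hnorm_sq (v : V) : hnorm c₂ v ^ 2 = ∑ i, μ i * ‖b.repr v i‖ ^ 2 := by
    rw [← hc₂]
    exact Real.sq_sqrt (c₂.re_inner_nonneg v)
  refine ⟨b.toBasis, μ, hμ, fun i => ?_, fun v => ?_⟩
  · have := hnorm_pos c₂ (b.toBasis.ne_zero i)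
    simpa [hnorm_sq, b.repr_self, PiLp.single_apply, apply_ite] using pow_pos this 2
  · simp only [OrthonormalBasis.coe_toBasis_repr_apply]
    exact ⟨by rw [← EuclideanSpace.norm_sq_eq, b.repr.norm_map]; rfl, hnorm_sq v⟩

lemma exists_submodules_hnorm_le_and_le (c₁ c₂ : InnerProductSpace.Core ℂ V) {j : ℕ}
    (hj1 : 1 ≤ j) (hjn : j ≤ finrank ℂ V) :
    ∃ t > 0, ∃ W W' : Submodule ℂ V,
      finrank ℂ W = j ∧ finrank ℂ W' = finrank ℂ V + 1 - j ∧
      (∀ w ∈ W, hnorm c₂ w ≤ t * hnorm c₁ w) ∧ ∀ w ∈ W', t * hnorm c₁ w ≤ hnorm c₂ w := by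
  obtain ⟨b, μ, hμ, hpos, hb⟩ := exists_basis_hnorm_sq_eq_sum c₁ c₂
  let k : Fin (finrank ℂ V) := ⟨finrank ℂ V - j, by omega⟩
  have hk : (k : ℕ) = finrank ℂ V - j := rfl
  have sq_sqrt_mul (y : ℝ) : (√(μ k) * y) ^ 2 = μ k * y ^ 2 := by
    rw [mul_pow, Real.sq_sqrt (hpos k).le]
  have hc₁ (w : V) : 0 ≤ √(μ k) * hnorm c₁ w := mul_nonneg (Real.sqrt_nonneg _) (hnorm_nonneg c₁ w)
  refine ⟨√(μ k), Real.sqrt_pos.2 (hpos k), span ℂ (b '' Finset.Ici k),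
    span ℂ (b '' Finset.Iic k), ?_, ?_, fun w hw => ?_, fun w hw => ?_⟩
  · rw [b.finrank_span_image, Fin.card_Ici, hk]
    omega
  · rw [b.finrank_span_image, Fin.card_Iic, hk]
    omega
  · rw [← pow_le_pow_iff_left₀ (hnorm_nonneg c₂ w) (hc₁ w) two_ne_zero, sq_sqrt_mul,
      (hb w).1, (hb w).2, Finset.mul_sum]
    exact b.sum_mul_norm_repr_sq_le (fun i hi => hμ (Finset.mem_Ici.1 hi)) hw
  · rw [← pow_le_pow_iff_left₀ (hc₁ w) (hnorm_nonneg c₂ w) two_ne_zero, sq_sqrt_mul,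
      (hb w).1, (hb w).2, Finset.mul_sum]
    exact b.sum_mul_norm_repr_sq_le (fun i hi => hμ (Finset.mem_Iic.1 hi)) hw

lemma exists_hnorm_le_mul (c c' : InnerProductSpace.Core ℂ V) :
    ∃ M, ∀ v, hnorm c' v ≤ M * hnorm c v := by
  obtain ⟨b, μ, -, hpos, hb⟩ := exists_basis_hnorm_sq_eq_sum c c'
  refine ⟨√(∑ i, μ i), fun v => ?_⟩
  rw [← Real.sqrt_sq (hnorm_nonneg c' v), ← Real.sqrt_sq (hnorm_nonneg c v), ← Real.sqrt_mul
    (Finset.sum_nonneg fun i _ => (hpos i).le), (hb v).1, (hb v).2, Finset.mul_sum]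
  gcongr with i
  exact Finset.single_le_sum (fun i _ => (hpos i).le) (Finset.mem_univ i)

lemma exists_abs_log_hnorm_div_le (c c' : InnerProductSpace.Core ℂ V) :
    ∃ C, ∀ v, v ≠ 0 → |Real.log (hnorm c' v / hnorm c v)| ≤ C := by
  obtain ⟨M, hM⟩ := exists_hnorm_le_mul c c'
  obtain ⟨M', hM'⟩ := exists_hnorm_le_mul c' c
  refine ⟨max (Real.log M) (Real.log M'), fun v hv => abs_le.2 ⟨?_, ?_⟩⟩
  all_goals have h := hnorm_pos c hv; have h' := hnorm_pos c' hv
  · rw [_root_.neg_le, ← Real.log_inv, inv_div]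
    exact le_max_of_le_right <| Real.log_le_log (by positivity) ((div_le_iff₀ h').2 (hM' v))
  · exact le_max_of_le_left <| Real.log_le_log (by positivity) ((div_le_iff₀ h).2 (hM v))

end HermitianNorm

section RelativeSpectrum

def logRatioSet (N₀ N₁ : V → ℝ) (W : Submodule ℂ V) : Set ℝ :=
  {x | ∃ w ∈ W, w ≠ 0 ∧ x = Real.log (N₁ w / N₀ w)}

lemma relSpec_eq_sSup (N₀ N₁ : V → ℝ) (j : ℕ) :
    relSpec N₀ N₁ j =
      sSup {r | ∃ W : Submodule ℂ V, finrank ℂ W = j ∧ r = sInf (logRatioSet N₀ N₁ W)} :=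
  rfl

variable {N₀ N₁ : V → ℝ} {C : ℝ}

lemma sInf_logRatioSet_le (hC : ∀ v, v ≠ 0 → |Real.log (N₁ v / N₀ v)| ≤ C)
    {W : Submodule ℂ V} {w : V} (hw : w ∈ W) (hw0 : w ≠ 0) :
    sInf (logRatioSet N₀ N₁ W) ≤ Real.log (N₁ w / N₀ w) := by
  refine csInf_le ⟨-C, ?_⟩ ⟨w, hw, hw0, rfl⟩
  rintro _ ⟨v, -, hv0, rfl⟩
  exact (abs_le.1 (hC v hv0)).1

lemma le_relSpec (hC : ∀ v, v ≠ 0 → |Real.log (N₁ v / N₀ v)| ≤ C) {j : ℕ} (hj : 1 ≤ j)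
    {W : Submodule ℂ V} (hW : finrank ℂ W = j) {r : ℝ}
    (hr : ∀ w ∈ W, w ≠ 0 → r ≤ Real.log (N₁ w / N₀ w)) : r ≤ relSpec N₀ N₁ j := by
  have exists_ne_zero (W' : Submodule ℂ V) (hW' : finrank ℂ W' = j) : ∃ w ∈ W', w ≠ 0 := by
    refine Submodule.exists_mem_ne_zero_of_ne_bot ?_
    rintro rfl
    simp only [finrank_bot] at hW'
    omega
  have hbdd : BddAbove {r | ∃ W : Submodule ℂ V, finrank ℂ W = j ∧
      r = sInf (logRatioSet N₀ N₁ W)} := by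
    refine ⟨C, ?_⟩
    rintro _ ⟨W', hW', rfl⟩
    obtain ⟨w, hw, hw0⟩ := exists_ne_zero W' hW'
    exact (sInf_logRatioSet_le hC hw hw0).trans (abs_le.1 (hC w hw0)).2
  obtain ⟨w, hw, hw0⟩ := exists_ne_zero W hW
  rw [relSpec_eq_sSup]
  refine le_trans ?_ (le_csSup hbdd ⟨W, hW, rfl⟩)
  refine le_csInf ⟨_, w, hw, hw0, rfl⟩ ?_
  rintro _ ⟨w, hw, hw0, rfl⟩
  exact hr w hw hw0

lemma dp_rpow_eq {p : ℝ} (hp : p ≠ 0) (N₀ N₁ : V → ℝ) :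
    dp p N₀ N₁ ^ p =
      (∑ j ∈ Finset.Icc 1 (finrank ℂ V), |relSpec N₀ N₁ j| ^ p) / finrank ℂ V := by
  rw [dp, one_div, Real.rpow_inv_rpow _ hp]
  positivity

end RelativeSpectrum

section HermitianRelativeSpectrum

variable [FiniteDimensional ℂ V]

lemma relSpec_hnorm_mono_right (c₀ : InnerProductSpace.Core ℂ V)
    {c₁ c₂ : InnerProductSpace.Core ℂ V} (h12 : ∀ v, hnorm c₁ v ≤ hnorm c₂ v) {j : ℕ}
    (hj1 : 1 ≤ j) (hjn : j ≤ finrank ℂ V) :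
    relSpec (hnorm c₀) (hnorm c₁) j ≤ relSpec (hnorm c₀) (hnorm c₂) j := by
  obtain ⟨C₁, hC₁⟩ := exists_abs_log_hnorm_div_le c₀ c₁
  obtain ⟨C₂, hC₂⟩ := exists_abs_log_hnorm_div_le c₀ c₂
  obtain ⟨W, hW⟩ := exists_submodule_finrank_eq hjn
  refine csSup_le ⟨_, W, hW, rfl⟩ ?_
  rintro _ ⟨W, hW, rfl⟩
  refine le_relSpec hC₂ hj1 hW fun w hw hw0 => (sInf_logRatioSet_le hC₁ hw hw0).trans ?_
  have := hnorm_pos c₀ hw0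
  have := hnorm_pos c₁ hw0
  gcongr
  exact h12 w

lemma neg_relSpec_le_relSpec_of_le {c₀ c₂ : InnerProductSpace.Core ℂ V}
    (h02 : ∀ v, hnorm c₀ v ≤ hnorm c₂ v) (c₁ : InnerProductSpace.Core ℂ V) {j : ℕ}
    (hj1 : 1 ≤ j) (hjn : j ≤ finrank ℂ V) :
    -relSpec (hnorm c₁) (hnorm c₂) (finrank ℂ V + 1 - j) ≤ relSpec (hnorm c₀) (hnorm c₁) j := by
  obtain ⟨t, ht, W, W', hW, hW', hle, hge⟩ := exists_submodules_hnorm_le_and_le c₁ c₂ hj1 hjn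
  obtain ⟨C₀₁, hC₀₁⟩ := exists_abs_log_hnorm_div_le c₀ c₁
  obtain ⟨C₁₂, hC₁₂⟩ := exists_abs_log_hnorm_div_le c₁ c₂
  have hW_le : -Real.log t ≤ relSpec (hnorm c₀) (hnorm c₁) j := by
    refine le_relSpec hC₀₁ hj1 hW fun w hw hw0 => ?_
    have := hnorm_pos c₀ hw0
    have := hnorm_pos c₁ hw0
    rw [← Real.log_inv]
    refine Real.log_le_log (by positivity) ?_
    rw [le_div_iff₀ (by positivity), inv_mul_le_iff₀ ht]
    exact (h02 w).trans (hle w hw)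
  have hW'_le : Real.log t ≤ relSpec (hnorm c₁) (hnorm c₂) (finrank ℂ V + 1 - j) :=
    le_relSpec hC₁₂ (by omega) hW' fun w hw hw0 =>
      Real.log_le_log ht ((le_div_iff₀ (hnorm_pos c₁ hw0)).2 (hge w hw))
  linarith

end HermitianRelativeSpectrum

theorem dp_pow_le_of_le_general
    {V : Type*} [AddCommGroup V] [Module ℂ V] [FiniteDimensional ℂ V]
    (c₀ c₁ c₂ : InnerProductSpace.Core ℂ V)
    (h02 : ∀ v : V, hnorm c₀ v ≤ hnorm c₂ v) (h12 : ∀ v : V, hnorm c₁ v ≤ hnorm c₂ v)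
    (p : ℝ) (hp : 1 ≤ p) :
    dp p (hnorm c₀) (hnorm c₁) ^ p ≤
      dp p (hnorm c₀) (hnorm c₂) ^ p + dp p (hnorm c₁) (hnorm c₂) ^ p := by
  have hp0 : 0 < p := zero_lt_one.trans_le hp
  simp only [dp_rpow_eq hp0.ne']
  rw [← add_div, ← Finset.sum_Icc_reflect (fun j => |relSpec (hnorm c₁) (hnorm c₂) j| ^ p),
    ← Finset.sum_add_distrib]
  gcongr with j hj
  obtain ⟨hj1, hjn⟩ := Finset.mem_Icc.1 hj
  exact abs_rpow_le_abs_rpow_add_abs_rpow hp0.le (relSpec_hnorm_mono_right c₀ h12 hj1 hjn)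
    (neg_relSpec_le_relSpec_of_le h02 c₁ hj1 hjn)

/-- for Hermitian norms `H₀ ≤ H₂` and `H₁ ≤ H₂` on an `n`-dimensional complex
vector space and `p ∈ [1,∞)`, `d_p(H₀,H₁)^p ≤ d_p(H₀,H₂)^p + d_p(H₁,H₂)^p`. -/
theorem dp_pow_le_of_le
    {V : Type*} [AddCommGroup V] [Module ℂ V] [FiniteDimensional ℂ V]
    {n : ℕ} (hn : 1 ≤ n) (hdim : Module.finrank ℂ V = n)
    (c₀ c₁ c₂ : InnerProductSpace.Core ℂ V)
    (h02 : ∀ v : V, hnorm c₀ v ≤ hnorm c₂ v) (h12 : ∀ v : V, hnorm c₁ v ≤ hnorm c₂ v)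
    (p : ℝ) (hp : 1 ≤ p) :
    dp p (hnorm c₀) (hnorm c₁) ^ p ≤
      dp p (hnorm c₀) (hnorm c₂) ^ p + dp p (hnorm c₁) (hnorm c₂) ^ p :=
  dp_pow_le_of_le_general c₀ c₁ c₂ h02 h12 p hp

end
end

section
/- Let V be a finite-dimensional complex vector space, e₁,…,e_n a basis of V, and H₀, H₁, H₂ Hermitian norms on V such that e₁,…,e_n diagonalizes both H₀ and H₁ (it is orthogonal for both), and such that H₀ ≤ H₂ and H₁ ≤ H₂ pointwise. Then H₀ ∨ H₁ ≤ ρ_e(H₂) pointwise on V, where ρ_e(H₂) is the Gram–Schmidt projection of H₂ with respect to the basis e₁,…,e_n. -/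
open scoped BigOperators
open Filter Classical

noncomputable section

variable {V : Type*} [AddCommGroup V] [Module ℂ V]

/-- A filtration on a complex vector space `V`: a left-continuous, decreasing family of
subspaces which equals `⊤` for `t` small enough and `⊥` for `t` large enough. -/
structure IsFiltrationC (F : ℝ → Submodule ℂ V) : Prop where
  antitone : ∀ ⦃s t : ℝ⦄, s ≤ t → F t ≤ F s
  left_cont : ∀ t : ℝ, ∃ ε > 0, ∀ δ : ℝ, 0 < δ → δ < ε → F (t - δ) = F t
  eventually_top : ∃ t₀ : ℝ, ∀ t ≤ t₀, F t = ⊤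
  eventually_bot : ∃ t₁ : ℝ, ∀ t, t₁ ≤ t → F t = ⊥

/-- `ρ` is the Gram–Schmidt projection of the Hermitian norm `c` with respect to the
basis `e`. -/
def IsGramSchmidtProj {V : Type*} [AddCommGroup V] [Module ℂ V] {n : ℕ} (e : Fin n → V)
    (c ρ : InnerProductSpace.Core ℂ V) : Prop :=
  OrthogonalFor ρ e ∧
  ∀ i : Fin n, hnorm ρ (e i) =
    sInf {r : ℝ | ∃ a : Fin n → ℂ,
      r = hnorm c (e i + ∑ j ∈ Finset.univ.filter (fun j : Fin n => j < i), a j • e j)}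

/-! In a basis orthogonal for a Hermitian norm `H`, Pythagoras gives
`H (∑ bᵢ eᵢ)² = ∑ |bᵢ|² H (eᵢ)²`, so two Hermitian norms diagonalized by `e` compare as they
compare on the `eᵢ`. On `eᵢ`, for `k = 0, 1`, Pythagoras again gives
`H_k (eᵢ) ≤ H_k (eᵢ + ∑_{j<i} aⱼ eⱼ) ≤ H₂ (eᵢ + ∑_{j<i} aⱼ eⱼ)`, and the infimum over `a` is
`ρ_e(H₂) (eᵢ)`. -/

section InnerProductSpace

variable {𝕜 E ι : Type*} [RCLike 𝕜] [SeminormedAddCommGroup E] [InnerProductSpace 𝕜 E]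
  {v : ι → E}

open scoped InnerProductSpace

theorem norm_sum_smul_sq_of_pairwise_inner_eq_zero (hv : Pairwise fun i j => ⟪v i, v j⟫_𝕜 = 0)
    (s : Finset ι) (b : ι → 𝕜) :
    ‖∑ i ∈ s, b i • v i‖ ^ 2 = ∑ i ∈ s, ‖b i‖ ^ 2 * ‖v i‖ ^ 2 := by
  induction s using Finset.induction_on with
  | empty => simp
  | insert a s ha ih =>
    have horth : ⟪b a • v a, ∑ i ∈ s, b i • v i⟫_𝕜 = 0 := by
      rw [inner_sum]
      refine Finset.sum_eq_zero fun i hi => ?_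
      rw [inner_smul_left, inner_smul_right, hv (ne_of_mem_of_not_mem hi ha).symm, mul_zero,
        mul_zero]
    rw [Finset.sum_insert ha, Finset.sum_insert ha, sq,
      norm_add_sq_eq_norm_sq_add_norm_sq_of_inner_eq_zero _ _ horth, ← sq, ← sq, ih, norm_smul,
      mul_pow]

theorem norm_le_norm_add_sum_of_pairwise_inner_eq_zero
    (hv : Pairwise fun i j => ⟪v i, v j⟫_𝕜 = 0) {s : Finset ι} {i : ι} (hi : i ∉ s)
    (a : ι → 𝕜) : ‖v i‖ ≤ ‖v i + ∑ j ∈ s, a j • v j‖ := by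
  have horth : ⟪v i, ∑ j ∈ s, a j • v j⟫_𝕜 = 0 := by
    rw [inner_sum]
    refine Finset.sum_eq_zero fun j hj => ?_
    rw [inner_smul_right, hv (ne_of_mem_of_not_mem hj hi).symm, mul_zero]
  refine le_of_sq_le_sq ?_ (norm_nonneg _)
  rw [sq, sq, norm_add_sq_eq_norm_sq_add_norm_sq_of_inner_eq_zero _ _ horth]
  exact le_add_of_nonneg_right (mul_self_nonneg _)

end InnerProductSpace

namespace OrthogonalFor

variable {ι : Type*} {c : InnerProductSpace.Core ℂ V} {e : ι → V}

/- `hnorm c` and `c.inner` are definitionally the norm and inner product of the inner product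
space structure `InnerProductSpace.ofCore` that `c` puts on `V`. -/

theorem hnorm_sum_smul_sq (he : OrthogonalFor c e) (s : Finset ι) (b : ι → ℂ) :
    hnorm c (∑ i ∈ s, b i • e i) ^ 2 = ∑ i ∈ s, ‖b i‖ ^ 2 * hnorm c (e i) ^ 2 := by
  let _ : SeminormedAddCommGroup V :=
    @InnerProductSpace.Core.toSeminormedAddCommGroup ℂ V _ _ _ c.toCore
  let _ : InnerProductSpace ℂ V := InnerProductSpace.ofCore c.toCore
  exact norm_sum_smul_sq_of_pairwise_inner_eq_zero he s b

theorem hnorm_le_hnorm_add_sum (he : OrthogonalFor c e) {s : Finset ι} {i : ι} (hi : i ∉ s)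
    (a : ι → ℂ) : hnorm c (e i) ≤ hnorm c (e i + ∑ j ∈ s, a j • e j) := by
  let _ : SeminormedAddCommGroup V :=
    @InnerProductSpace.Core.toSeminormedAddCommGroup ℂ V _ _ _ c.toCore
  let _ : InnerProductSpace ℂ V := InnerProductSpace.ofCore c.toCore
  exact norm_le_norm_add_sum_of_pairwise_inner_eq_zero he hi a

theorem hnorm_le_of_hnorm_basis_le [Fintype ι] {d : InnerProductSpace.Core ℂ V}
    (b : Module.Basis ι ℂ V) (hc : OrthogonalFor c b) (hd : OrthogonalFor d b)
    (h : ∀ i, hnorm c (b i) ≤ hnorm d (b i)) (v : V) : hnorm c v ≤ hnorm d v := by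
  refine le_of_sq_le_sq ?_ (Real.sqrt_nonneg _)
  rw [← b.sum_repr v, hc.hnorm_sum_smul_sq, hd.hnorm_sum_smul_sq]
  gcongr with i
  exacts [Real.sqrt_nonneg _, h i]

theorem hnorm_le_of_isGramSchmidtProj {n : ℕ} {e : Fin n → V} (he : OrthogonalFor c e)
    {c' ρ : InnerProductSpace.Core ℂ V} (hcc' : ∀ v, hnorm c v ≤ hnorm c' v)
    (hρ : IsGramSchmidtProj e c' ρ) (i : Fin n) : hnorm c (e i) ≤ hnorm ρ (e i) := by
  rw [hρ.2 i]
  refine le_csInf ⟨_, 0, rfl⟩ ?_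
  rintro r ⟨a, rfl⟩
  exact (he.hnorm_le_hnorm_add_sum (by simp) a).trans (hcc' _)

end OrthogonalFor

theorem max_le_gramSchmidt_general
    {V : Type*} [AddCommGroup V] [Module ℂ V]
    {n : ℕ} (e : Module.Basis (Fin n) ℂ V)
    (c₀ c₁ c₂ cmax ρc₂ : InnerProductSpace.Core ℂ V)
    (he₀ : OrthogonalFor c₀ (⇑e)) (he₁ : OrthogonalFor c₁ (⇑e))
    (h02 : ∀ v : V, hnorm c₀ v ≤ hnorm c₂ v) (h12 : ∀ v : V, hnorm c₁ v ≤ hnorm c₂ v)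
    -- `cmax` is the Hermitian norm `H₀ ∨ H₁`
    (hemax : OrthogonalFor cmax (⇑e))
    (hmax : ∀ i : Fin n, hnorm cmax (e i) = max (hnorm c₀ (e i)) (hnorm c₁ (e i)))
    -- `ρc₂` is the Gram–Schmidt projection of `H₂`
    (hρ : IsGramSchmidtProj (⇑e) c₂ ρc₂) :
    ∀ v : V, hnorm cmax v ≤ hnorm ρc₂ v :=
  hemax.hnorm_le_of_hnorm_basis_le e hρ.1 fun i => (hmax i).trans_le <|
    max_le (he₀.hnorm_le_of_isGramSchmidtProj h02 hρ i)
      (he₁.hnorm_le_of_isGramSchmidtProj h12 hρ i)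

/-- if `e₁,…,eₙ` diagonalizes both `H₀` and `H₁`, and `H₀ ≤ H₂`, `H₁ ≤ H₂`
pointwise, then `H₀ ∨ H₁ ≤ ρ_e(H₂)` pointwise. -/
theorem max_le_gramSchmidt
    {V : Type*} [AddCommGroup V] [Module ℂ V] [FiniteDimensional ℂ V]
    {n : ℕ} (e : Module.Basis (Fin n) ℂ V)
    (c₀ c₁ c₂ cmax ρc₂ : InnerProductSpace.Core ℂ V)
    (he₀ : OrthogonalFor c₀ (⇑e)) (he₁ : OrthogonalFor c₁ (⇑e))
    (h02 : ∀ v : V, hnorm c₀ v ≤ hnorm c₂ v) (h12 : ∀ v : V, hnorm c₁ v ≤ hnorm c₂ v)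
    -- `cmax` is the Hermitian norm `H₀ ∨ H₁`
    (hemax : OrthogonalFor cmax (⇑e))
    (hmax : ∀ i : Fin n, hnorm cmax (e i) = max (hnorm c₀ (e i)) (hnorm c₁ (e i)))
    -- `ρc₂` is the Gram–Schmidt projection of `H₂`
    (hρ : IsGramSchmidtProj (⇑e) c₂ ρc₂) :
    ∀ v : V, hnorm cmax v ≤ hnorm ρc₂ v :=
  max_le_gramSchmidt_general e c₀ c₁ c₂ cmax ρc₂ he₀ he₁ h02 h12 hemax hmax hρ

end
end

section
/- Let V be an n-dimensional complex vector space, n ≥ 1, and N₀, N₁ two norms on V. Then d_∞(N₀, N₁) is the multiplicative gap between N₀ and N₁: it equals the minimal constant C ≥ 0 such that N₀ ≤ exp(C)·N₁ and N₁ ≤ exp(C)·N₀ pointwise on V. -/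
open scoped BigOperators
open Filter Classical

noncomputable section

variable {V : Type*} [AddCommGroup V] [Module ℂ V]

/-! With `r v = log (N₁ v / N₀ v)`, which is constant on complex lines and bounded on `V ∖ 0`
(all norms on a finite-dimensional space are equivalent), every `μ_j` lies between `inf r` and
`sup r`; moreover `μ_1 = sup r` (take `W` a line) and `μ_n = inf r` (take `W = V`). Hence
`d_∞ = max (sup r) (- inf r) = sup |r|`, which is the least `C ≥ 0` with
`e^{-C} ≤ N₁ / N₀ ≤ e^C`. -/

open Module Set

section Minimax

variable {K E : Type*} [DivisionRing K] [AddCommGroup E] [Module K E]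

theorem Submodule.exists_finrank_eq {j : ℕ} (hj : j ≤ finrank K E) :
    ∃ W : Submodule K E, finrank K W = j := by
  obtain ⟨b, hb⟩ := exists_linearIndependent_of_le_finrank hj
  exact ⟨Submodule.span K (range b), by rw [finrank_span_eq_card hb, Fintype.card_fin]⟩

def infOnNonzero (f : E → ℝ) (W : Submodule K E) : ℝ :=
  sInf {x | ∃ w ∈ W, w ≠ 0 ∧ x = f w}

variable (K) in
/-- `relSpec N₀ N₁` is `minimaxValue ℂ (logRatio N₀ N₁)` by definition. -/
def minimaxValue (f : E → ℝ) (j : ℕ) : ℝ :=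
  sSup {r | ∃ W : Submodule K E, finrank K W = j ∧ r = infOnNonzero f W}

variable {f : E → ℝ} {m M : ℝ} {W : Submodule K E}

theorem infOnNonzero_le (hm : ∀ v, v ≠ 0 → m ≤ f v) {w : E} (hw : w ∈ W) (hw0 : w ≠ 0) :
    infOnNonzero f W ≤ f w :=
  csInf_le ⟨m, by rintro _ ⟨v, -, hv, rfl⟩; exact hm v hv⟩ ⟨w, hw, hw0, rfl⟩

theorem infOnNonzero_mem_Icc (hf : ∀ v, v ≠ 0 → f v ∈ Icc m M) (hW : 0 < finrank K W) :
    infOnNonzero f W ∈ Icc m M := by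
  obtain ⟨w, hw, hw0⟩ := W.exists_mem_ne_zero_of_ne_bot (by rintro rfl; simp at hW)
  refine ⟨le_csInf ⟨_, w, hw, hw0, rfl⟩ ?_,
    (infOnNonzero_le (hf · · |>.1) hw hw0).trans (hf w hw0).2⟩
  rintro _ ⟨v, -, hv, rfl⟩
  exact (hf v hv).1

theorem infOnNonzero_span_singleton (hf : ∀ (a : K) v, a ≠ 0 → f (a • v) = f v) {v : E}
    (hv : v ≠ 0) : infOnNonzero f (K ∙ v) = f v := by
  have : {x | ∃ w ∈ K ∙ v, w ≠ 0 ∧ x = f w} = {f v} := by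
    ext x
    constructor
    · rintro ⟨w, hw, hw0, rfl⟩
      obtain ⟨a, rfl⟩ := Submodule.mem_span_singleton.1 hw
      exact hf a v (by rintro rfl; simp at hw0)
    · rintro rfl
      exact ⟨v, Submodule.mem_span_singleton_self v, hv, rfl⟩
  rw [infOnNonzero, this, csInf_singleton]

theorem minimaxValue_mem_Icc (hf : ∀ v, v ≠ 0 → f v ∈ Icc m M) {j : ℕ} (hj : 1 ≤ j)
    (hjE : j ≤ finrank K E) : minimaxValue K f j ∈ Icc m M := by
  set S := {r | ∃ W : Submodule K E, finrank K W = j ∧ r = infOnNonzero f W}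
  have hmem : ∀ r ∈ S, r ∈ Icc m M := by
    rintro _ ⟨W, hW, rfl⟩
    exact infOnNonzero_mem_Icc hf (hW ▸ hj)
  obtain ⟨W, hW⟩ := Submodule.exists_finrank_eq hjE
  exact ⟨(hmem _ ⟨W, hW, rfl⟩).1.trans (le_csSup ⟨M, fun r hr => (hmem r hr).2⟩ ⟨W, hW, rfl⟩),
    csSup_le ⟨_, W, hW, rfl⟩ fun r hr => (hmem r hr).2⟩

theorem le_minimaxValue_one (hinv : ∀ (a : K) v, a ≠ 0 → f (a • v) = f v)
    (hf : ∀ v, v ≠ 0 → f v ∈ Icc m M) {v : E} (hv : v ≠ 0) : f v ≤ minimaxValue K f 1 := by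
  refine le_csSup ⟨M, ?_⟩
    ⟨K ∙ v, finrank_span_singleton hv, (infOnNonzero_span_singleton hinv hv).symm⟩
  rintro _ ⟨W, hW, rfl⟩
  exact (infOnNonzero_mem_Icc hf (by omega)).2

theorem minimaxValue_finrank_le [FiniteDimensional K E] (hm : ∀ v, v ≠ 0 → m ≤ f v) {v : E}
    (hv : v ≠ 0) : minimaxValue K f (finrank K E) ≤ f v := by
  refine csSup_le ⟨_, ⊤, finrank_top K E, rfl⟩ ?_
  rintro _ ⟨W, hW, rfl⟩
  rw [Submodule.eq_top_of_finrank_eq hW]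
  exact infOnNonzero_le hm Submodule.mem_top hv

theorem isLeast_sSup_abs_minimaxValue [FiniteDimensional K E]
    (hinv : ∀ (a : K) v, a ≠ 0 → f (a • v) = f v) (hbdd : ∃ C, ∀ v, v ≠ 0 → |f v| ≤ C) :
    IsLeast {C | 0 ≤ C ∧ ∀ v, v ≠ 0 → |f v| ≤ C}
      (sSup {r | ∃ j ∈ Finset.Icc 1 (finrank K E), r = |minimaxValue K f j|}) := by
  set S := {r | ∃ j ∈ Finset.Icc 1 (finrank K E), r = |minimaxValue K f j|}
  have hS : ∀ C, (∀ v, v ≠ 0 → |f v| ≤ C) → ∀ r ∈ S, r ≤ C := by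
    rintro C hC _ ⟨j, hj, rfl⟩
    rw [Finset.mem_Icc] at hj
    exact abs_le.2 (minimaxValue_mem_Icc (fun v hv => abs_le.1 (hC v hv)) hj.1 hj.2)
  -- `Real.sSup_nonneg` and `Real.sSup_le` also cover `E = 0`, where `S = ∅` and `sSup ∅ = 0`.
  refine ⟨⟨Real.sSup_nonneg (by rintro _ ⟨j, -, rfl⟩; exact abs_nonneg _), fun v hv => ?_⟩,
    fun C ⟨hC0, hC⟩ => Real.sSup_le (hS C hC) hC0⟩
  obtain ⟨C₀, hC₀⟩ := hbdd
  have hSbdd : BddAbove S := ⟨C₀, hS C₀ hC₀⟩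
  have hf : ∀ v, v ≠ 0 → f v ∈ Icc (-C₀) C₀ := fun v hv => abs_le.1 (hC₀ v hv)
  have hE : 1 ≤ finrank K E := finrank_pos_iff_exists_ne_zero.2 ⟨v, hv⟩
  rw [abs_le]
  constructor
  · calc -sSup S ≤ -|minimaxValue K f (finrank K E)| :=
          neg_le_neg (le_csSup hSbdd ⟨_, Finset.mem_Icc.2 ⟨hE, le_rfl⟩, rfl⟩)
      _ ≤ minimaxValue K f (finrank K E) := neg_abs_le _
      _ ≤ f v := minimaxValue_finrank_le (hf · · |>.1) hv
  · calc f v ≤ minimaxValue K f 1 := le_minimaxValue_one hinv hf hv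
      _ ≤ |minimaxValue K f 1| := le_abs_self _
      _ ≤ sSup S := le_csSup hSbdd ⟨1, Finset.mem_Icc.2 ⟨le_rfl, hE⟩, rfl⟩

end Minimax

namespace IsComplexNorm

variable {N : V → ℝ}

theorem map_zero (h : IsComplexNorm N) : N 0 = 0 :=
  (h.eq_zero_iff 0).2 rfl

theorem map_neg (h : IsComplexNorm N) (v : V) : N (-v) = N v := by
  simpa using h.smul (-1) v

theorem nonneg (h : IsComplexNorm N) (v : V) : 0 ≤ N v := by
  have := h.add_le v (-v)
  rw [add_neg_cancel, h.map_zero, h.map_neg] at this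
  linarith

theorem pos (h : IsComplexNorm N) {v : V} (hv : v ≠ 0) : 0 < N v :=
  (h.nonneg v).lt_of_ne' (mt (h.eq_zero_iff v).1 hv)

def toAddGroupNorm (h : IsComplexNorm N) : AddGroupNorm V where
  toFun := N
  map_zero' := h.map_zero
  add_le' := h.add_le
  neg' := h.map_neg
  eq_zero_of_map_eq_zero' := fun v => (h.eq_zero_iff v).1

theorem exists_le_exp_mul [FiniteDimensional ℂ V] (h : IsComplexNorm N) {E : Type*}
    [NormedAddCommGroup E] [NormedSpace ℂ E] (e : V ≃ₗ[ℂ] E) :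
    ∃ C, ∀ v, N v ≤ Real.exp C * ‖e v‖ ∧ ‖e v‖ ≤ Real.exp C * N v := by
  let _ : NormedAddCommGroup V := h.toAddGroupNorm.toNormedAddCommGroup
  let _ : NormedSpace ℂ V := ⟨fun a v => (h.smul a v).le⟩
  let L := e.toContinuousLinearEquiv
  set C := ‖(L : V →L[ℂ] E)‖ + ‖(L.symm : E →L[ℂ] V)‖
  have hL : ‖(L : V →L[ℂ] E)‖ ≤ Real.exp C := by
    linarith [Real.add_one_le_exp C, norm_nonneg (L.symm : E →L[ℂ] V)]
  have hLsymm : ‖(L.symm : E →L[ℂ] V)‖ ≤ Real.exp C := by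
    linarith [Real.add_one_le_exp C, norm_nonneg (L : V →L[ℂ] E)]
  refine ⟨C, fun v => ⟨?_, ?_⟩⟩
  · calc N v = ‖L.symm (L v)‖ := by rw [L.symm_apply_apply]; rfl
      _ ≤ ‖(L.symm : E →L[ℂ] V)‖ * ‖L v‖ := (L.symm : E →L[ℂ] V).le_opNorm _
      _ ≤ Real.exp C * ‖e v‖ := mul_le_mul_of_nonneg_right hLsymm (norm_nonneg _)
  · calc ‖e v‖ = ‖L v‖ := rfl
      _ ≤ ‖(L : V →L[ℂ] E)‖ * ‖v‖ := (L : V →L[ℂ] E).le_opNorm v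
      _ ≤ Real.exp C * N v := mul_le_mul_of_nonneg_right hL (h.nonneg v)

end IsComplexNorm

theorem abs_log_div_le_iff {a b C : ℝ} (ha : 0 < a) (hb : 0 < b) :
    |Real.log (b / a)| ≤ C ↔ a ≤ Real.exp C * b ∧ b ≤ Real.exp C * a := by
  rw [abs_le, neg_le, ← Real.log_inv, inv_div,
    Real.log_le_iff_le_exp (div_pos ha hb), Real.log_le_iff_le_exp (div_pos hb ha),
    div_le_iff₀ hb, div_le_iff₀ ha]

def logRatio (N₀ N₁ : V → ℝ) (v : V) : ℝ :=
  Real.log (N₁ v / N₀ v)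

variable {N₀ N₁ : V → ℝ}

theorem logRatio_smul (h₀ : IsComplexNorm N₀) (h₁ : IsComplexNorm N₁) (a : ℂ) (v : V)
    (ha : a ≠ 0) : logRatio N₀ N₁ (a • v) = logRatio N₀ N₁ v := by
  rw [logRatio, logRatio, h₀.smul, h₁.smul, mul_div_mul_left _ _ (norm_ne_zero_iff.2 ha)]

theorem forall_le_exp_mul_iff_abs_logRatio_le (h₀ : IsComplexNorm N₀) (h₁ : IsComplexNorm N₁)
    (C : ℝ) : ((∀ v, N₀ v ≤ Real.exp C * N₁ v) ∧ ∀ v, N₁ v ≤ Real.exp C * N₀ v) ↔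
      ∀ v, v ≠ 0 → |logRatio N₀ N₁ v| ≤ C := by
  rw [← forall_and]
  refine forall_congr' fun v => ?_
  rcases eq_or_ne v 0 with rfl | hv
  · simp [h₀.map_zero, h₁.map_zero]
  · simp only [ne_eq, hv, not_false_eq_true, forall_const, logRatio]
    exact (abs_log_div_le_iff (h₀.pos hv) (h₁.pos hv)).symm

theorem exists_abs_logRatio_le [FiniteDimensional ℂ V] (h₀ : IsComplexNorm N₀)
    (h₁ : IsComplexNorm N₁) : ∃ C, ∀ v, v ≠ 0 → |logRatio N₀ N₁ v| ≤ C := by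
  let e := (Module.finBasis ℂ V).equivFun
  obtain ⟨C₀, hC₀⟩ := h₀.exists_le_exp_mul e
  obtain ⟨C₁, hC₁⟩ := h₁.exists_le_exp_mul e
  refine ⟨C₀ + C₁,
    (forall_le_exp_mul_iff_abs_logRatio_le h₀ h₁ _).1 ⟨fun v => ?_, fun v => ?_⟩⟩
  · calc N₀ v ≤ Real.exp C₀ * ‖e v‖ := (hC₀ v).1
      _ ≤ Real.exp C₀ * (Real.exp C₁ * N₁ v) := by gcongr; exact (hC₁ v).2
      _ = Real.exp (C₀ + C₁) * N₁ v := by rw [Real.exp_add]; ring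
  · calc N₁ v ≤ Real.exp C₁ * ‖e v‖ := (hC₁ v).1
      _ ≤ Real.exp C₁ * (Real.exp C₀ * N₀ v) := by gcongr; exact (hC₀ v).2
      _ = Real.exp (C₀ + C₁) * N₀ v := by rw [Real.exp_add]; ring

theorem dInf_eq_multiplicative_gap_general
    {V : Type*} [AddCommGroup V] [Module ℂ V] [FiniteDimensional ℂ V]
    (N₀ N₁ : V → ℝ) (h₀ : IsComplexNorm N₀) (h₁ : IsComplexNorm N₁) :
    IsLeast {C : ℝ | 0 ≤ C ∧ (∀ v : V, N₀ v ≤ Real.exp C * N₁ v) ∧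
      (∀ v : V, N₁ v ≤ Real.exp C * N₀ v)} (dInf N₀ N₁) := by
  have hgap : {C : ℝ | 0 ≤ C ∧ (∀ v : V, N₀ v ≤ Real.exp C * N₁ v) ∧
      (∀ v : V, N₁ v ≤ Real.exp C * N₀ v)} =
      {C | 0 ≤ C ∧ ∀ v, v ≠ 0 → |logRatio N₀ N₁ v| ≤ C} :=
    Set.ext fun C => and_congr_right fun _ => forall_le_exp_mul_iff_abs_logRatio_le h₀ h₁ C
  rw [hgap]
  exact isLeast_sSup_abs_minimaxValue (logRatio_smul h₀ h₁) (exists_abs_logRatio_le h₀ h₁)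

/-- `d_∞(N₀,N₁)` is the multiplicative gap between two norms: the least
`C ≥ 0` such that `N₀ ≤ exp C · N₁` and `N₁ ≤ exp C · N₀` pointwise. -/
theorem dInf_eq_multiplicative_gap
    {V : Type*} [AddCommGroup V] [Module ℂ V] [FiniteDimensional ℂ V]
    {n : ℕ} (hn : 1 ≤ n) (hdim : Module.finrank ℂ V = n)
    (N₀ N₁ : V → ℝ) (h₀ : IsComplexNorm N₀) (h₁ : IsComplexNorm N₁) :
    IsLeast {C : ℝ | 0 ≤ C ∧ (∀ v : V, N₀ v ≤ Real.exp C * N₁ v) ∧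
      (∀ v : V, N₁ v ≤ Real.exp C * N₀ v)} (dInf N₀ N₁) :=
  dInf_eq_multiplicative_gap_general N₀ N₁ h₀ h₁
end
end
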